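/- Let h ∈ Aut(X*) satisfy h^m = 1, and let {v₁,…,v_m} ⊆ Xⁿ be an orbit of h of size m, labeled so that v_i^h = v_{i-1} with indices read modulo m (so v₁^h = v_m). For i = 1,…,m set h_i = (h@v₁)⁻¹(h@v₂)⁻¹⋯(h@v_i)⁻¹. Let k₁,…,k_m ∈ Aut(X*), and define tuples by k⁽⁰⁾_i = k_i and k⁽ᶜ⁺¹⁾_i = (k⁽ᶜ⁾_i)⁻¹ k⁽ᶜ⁾_{i+1} (indices modulo m). Set g = ∏_{i=1}^m v_i*(k_i^{h_i}). Then for every c ≥ 0, E_c(g,h) = ∏_{i=1}^m v_i*((k⁽ᶜ⁾_i)^{h_i}). In particular, if for every c there is some i with k⁽ᶜ⁾_i ≠ 1, then E_c(g,h) ≠ 1 for all c, so (g,h) is not an Engel pair. -/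

import Mathlib

namespace AutSG

variable {X Q : Type*}

/-- The action of a state `q` of a Mealy automaton with transition function `δ`
and output function `out` on finite words over the alphabet `X`. -/
def mAct (δ : Q → X → Q) (out : Q → X → X) : Q → List X → List X
  | _, [] => []
  | q, x :: w => out q x :: mAct δ out (δ q x) w

theorem mAct_bijective (δ : Q → X → Q) (out : Q → X → X)
    (hout : ∀ q, Function.Bijective (out q)) (q : Q) :
    Function.Bijective (mAct δ out q) := by
  have key : ∀ (l₁ : List X) (q : Q) (l₂ : List X),
      mAct δ out q l₁ = mAct δ out q l₂ → l₁ = l₂ := by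
    intro l₁
    induction l₁ with
    | nil =>
      intro q l₂ h
      cases l₂ with
      | nil => rfl
      | cons y u => exact absurd h (by simp [mAct])
    | cons x w ih =>
      intro q l₂ h
      cases l₂ with
      | nil => exact absurd h (by simp [mAct])
      | cons y u =>
        simp only [mAct, List.cons.injEq] at h
        obtain rfl : x = y := (hout q).1 h.1
        rw [ih (δ q x) u h.2]
  have key2 : ∀ (l : List X) (q : Q), ∃ m, mAct δ out q m = l := by
    intro l
    induction l with
    | nil => exact fun q => ⟨[], rfl⟩
    | cons y u ih =>
      intro q
      obtain ⟨x, hx⟩ := (hout q).2 y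
      obtain ⟨m, hm⟩ := ih (δ q x)
      exact ⟨x :: m, by simp [mAct, hx, hm]⟩
  exact ⟨fun {l₁ l₂} h => key l₁ q l₂ h, fun l => key2 l q⟩

/-- The permutation of `X*` induced by the state `q` of an invertible Mealy automaton,
as an element of `Equiv.Perm (List X)`.  We use the convention that permutations act
on the *right* via `rApp` below, so that the Lean group multiplication `g * h`
corresponds to "first `g`, then `h`", as in the usual convention for automaton groups. -/
noncomputable def genPerm (δ : Q → X → Q) (out : Q → X → X)
    (hout : ∀ q, Function.Bijective (out q)) (q : Q) : Equiv.Perm (List X) :=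
  (Equiv.ofBijective _ (mAct_bijective δ out hout q))⁻¹

/-- Right action of a permutation on words: `rApp g w` is `w^g`.
Note `rApp (g * h) w = rApp h (rApp g w)`. -/
def rApp (g : Equiv.Perm (List X)) (w : List X) : List X := g⁻¹ w

theorem rApp_genPerm (δ : Q → X → Q) (out : Q → X → X)
    (hout : ∀ q, Function.Bijective (out q)) (q : Q) (w : List X) :
    rApp (genPerm δ out hout q) w = mAct δ out q w := by
  simp [rApp, genPerm, Equiv.ofBijective]

/-- Commutator with the convention `[x,y] = x⁻¹y⁻¹xy`. -/
def comm {G : Type*} [Group G] (x y : G) : G := x⁻¹ * y⁻¹ * x * y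

/-- Conjugation with the convention `y^z = z⁻¹yz`. -/
def conj {G : Type*} [Group G] (y z : G) : G := z⁻¹ * y * z

/-- Iterated commutators: `E₀(g,h) = g`, `E_{c+1}(g,h) = [E_c(g,h), h]`. -/
def engel {G : Type*} [Group G] : ℕ → G → G → G
  | 0, g, _ => g
  | c + 1, g, h => comm (engel c g h) h

/-- `vStar v k` is the permutation `v*k` of `X*`: it maps `v ++ w` to `v ++ w^k`
(with respect to the right action `rApp`) and fixes every word not having `v`
as a prefix. -/
def vStar [DecidableEq X] (v : List X) (k : Equiv.Perm (List X)) :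
    Equiv.Perm (List X) where
  toFun w := if v <+: w then v ++ k (w.drop v.length) else w
  invFun w := if v <+: w then v ++ k.symm (w.drop v.length) else w
  left_inv w := by
    by_cases h : v <+: w
    · simp only [if_pos h, if_pos (List.prefix_append v _), List.drop_left,
        Equiv.symm_apply_apply]
      exact List.prefix_iff_eq_append.mp h
    · simp only [if_neg h]
  right_inv w := by
    by_cases h : v <+: w
    · simp only [if_pos h, if_pos (List.prefix_append v _), List.drop_left,
        Equiv.apply_symm_apply]
      exact List.prefix_iff_eq_append.mp h
    · simp only [if_neg h]

end AutSG
namespace AutSG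

/-- `g` is an automorphism of the tree `X*`: it preserves word length and
prefixes (with respect to the right action `rApp`). -/
def treeAut {X : Type*} (g : Equiv.Perm (List X)) : Prop :=
  (∀ w : List X, (rApp g w).length = w.length) ∧
  ∀ u w : List X, u <+: w → rApp g u <+: rApp g w

end AutSG


namespace AutSG

variable {X : Type*}

theorem rApp_mul (g h : Equiv.Perm (List X)) (w : List X) :
    rApp (g * h) w = rApp h (rApp g w) := by
  simp [rApp, mul_inv_rev]

theorem rApp_one' (w : List X) : rApp (1 : Equiv.Perm (List X)) w = w := rfl

theorem rApp_inv_rApp (g : Equiv.Perm (List X)) (w : List X) :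
    rApp g⁻¹ (rApp g w) = w := by simp [rApp]

theorem rApp_rApp_inv (g : Equiv.Perm (List X)) (w : List X) :
    rApp g (rApp g⁻¹ w) = w := by simp [rApp]

theorem rApp_ext {g h : Equiv.Perm (List X)} (H : ∀ w, rApp g w = rApp h w) :
    g = h := by
  have : g⁻¹ = h⁻¹ := Equiv.ext H
  simpa using congrArg Inv.inv this

theorem rApp_vStar_prefix [DecidableEq X] (v : List X) (k : Equiv.Perm (List X))
    (u : List X) : rApp (vStar v k) (v ++ u) = v ++ rApp k u := by
  show (vStar v k).symm (v ++ u) = v ++ k.symm u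
  simp [vStar, List.prefix_append]

theorem rApp_vStar_not_prefix [DecidableEq X] (v : List X) (k : Equiv.Perm (List X))
    (w : List X) (h : ¬ v <+: w) : rApp (vStar v k) w = w := by
  show (vStar v k).symm w = w
  simp [vStar, h]

theorem conj_eq_one_iff {G : Type*} [Group G] (y z : G) : conj y z = 1 ↔ y = 1 := by
  rw [conj, mul_assoc]; constructor
  · intro h; have := congrArg (fun x => z * x * z⁻¹) h; simpa [mul_assoc] using this
  · rintro rfl; simp

section
variable [DecidableEq X] {m : ℕ} (v : Fin m → List X)

/-- The product `∏ᵢ (v i)*(a i)` over all `i : Fin m`. -/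
def Pr (a : Fin m → Equiv.Perm (List X)) : Equiv.Perm (List X) :=
  ((List.finRange m).map fun i => vStar (v i) (a i)).prod

theorem rApp_prod_fix (f : Fin m → Equiv.Perm (List X))
    (l : List (Fin m)) (w : List X) (hw : ∀ j ∈ l, ¬ v j <+: w) :
    rApp ((l.map fun i => vStar (v i) (f i)).prod) w = w := by
  induction l with
  | nil => simp [rApp_one']
  | cons j t ih =>
    rw [List.map_cons, List.prod_cons, rApp_mul,
      rApp_vStar_not_prefix _ _ _ (hw j (by simp))]
    exact ih fun j' hj' => hw j' (by simp [hj'])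

theorem rApp_prod_act
    (hpref : ∀ i j : Fin m, ∀ u, v i <+: v j ++ u → i = j)
    (f : Fin m → Equiv.Perm (List X)) (l : List (Fin m)) (hl : l.Nodup)
    (i : Fin m) (hil : i ∈ l) (u : List X) :
    rApp ((l.map fun j => vStar (v j) (f j)).prod) (v i ++ u)
      = v i ++ rApp (f i) u := by
  induction l with
  | nil => simp at hil
  | cons j t ih =>
    rw [List.map_cons, List.prod_cons, rApp_mul]
    rcases List.mem_cons.mp hil with rfl | hit
    · rw [rApp_vStar_prefix]
      exact rApp_prod_fix v f t _ fun j' hj' hp =>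
        (List.nodup_cons.mp hl).1 (hpref j' i _ hp ▸ hj')
    · rw [rApp_vStar_not_prefix _ _ _ fun hp =>
        (List.nodup_cons.mp hl).1 ((hpref j i u hp) ▸ hit)]
      exact ih (List.nodup_cons.mp hl).2 hit

theorem rApp_Pr_act (hpref : ∀ i j : Fin m, ∀ u, v i <+: v j ++ u → i = j)
    (a : Fin m → Equiv.Perm (List X)) (i : Fin m) (u : List X) :
    rApp (Pr v a) (v i ++ u) = v i ++ rApp (a i) u :=
  rApp_prod_act v hpref a _ (List.nodup_finRange m) i (List.mem_finRange i) u

theorem rApp_Pr_fix (a : Fin m → Equiv.Perm (List X)) (w : List X)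
    (hw : ∀ i, ¬ v i <+: w) : rApp (Pr v a) w = w :=
  rApp_prod_fix v a _ w fun j _ => hw j

theorem rApp_Pr_inv_act (hpref : ∀ i j : Fin m, ∀ u, v i <+: v j ++ u → i = j)
    (a : Fin m → Equiv.Perm (List X)) (i : Fin m) (u : List X) :
    rApp (Pr v a)⁻¹ (v i ++ u) = v i ++ rApp (a i)⁻¹ u := by
  conv_lhs => rw [show (v i ++ u) = rApp (Pr v a) (v i ++ rApp (a i)⁻¹ u) by
    rw [rApp_Pr_act v hpref, rApp_rApp_inv]]
  rw [rApp_inv_rApp]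

theorem rApp_Pr_inv_fix (a : Fin m → Equiv.Perm (List X)) (w : List X)
    (hw : ∀ i, ¬ v i <+: w) : rApp (Pr v a)⁻¹ w = w := by
  conv_lhs => rw [show w = rApp (Pr v a) w from (rApp_Pr_fix v a w hw).symm]
  rw [rApp_inv_rApp]

theorem Pr_unique (hpref : ∀ i j : Fin m, ∀ u, v i <+: v j ++ u → i = j)
    (a : Fin m → Equiv.Perm (List X)) (p : Equiv.Perm (List X))
    (h1 : ∀ i u, rApp p (v i ++ u) = v i ++ rApp (a i) u)
    (h2 : ∀ w, (∀ i, ¬ v i <+: w) → rApp p w = w) : p = Pr v a := by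
  apply rApp_ext; intro w
  by_cases hw : ∃ i, v i <+: w
  · obtain ⟨i, u, rfl⟩ : ∃ i u, w = v i ++ u := by
      obtain ⟨i, hiw⟩ := hw; obtain ⟨u, hu⟩ := hiw; exact ⟨i, u, hu.symm⟩
    rw [h1, rApp_Pr_act v hpref]
  · push_neg at hw
    rw [h2 w hw, rApp_Pr_fix v a w hw]

end
end AutSG

open AutSG in
/-- Let `h ∈ Aut(X*)` with `h^m = 1` and let `v 0, …, v (m-1)` be an orbit of `h`
of size `m` inside `Xⁿ`, labeled so that `(v i)^h = v (i-1)` (indices mod `m`).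
Let `s i` be the state `h@(v i)`, and set `h_i = (h@v₀)⁻¹⋯(h@v_i)⁻¹`.  Given
`k i ∈ Aut(X*)`, define `k⁽⁰⁾ = k` and `k⁽ᶜ⁺¹⁾ i = (k⁽ᶜ⁾ i)⁻¹ * k⁽ᶜ⁾ (i+1)`
(indices mod `m`), and let `g = ∏ᵢ (v i)*((k i)^{h_i})`.  Then for every `c`,
`E_c(g,h) = ∏ᵢ (v i)*((k⁽ᶜ⁾ i)^{h_i})`; in particular, if for every `c` some
`k⁽ᶜ⁾ i` is nontrivial, then `(g,h)` is not an Engel pair. -/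
theorem engel_formula_on_orbit {X : Type*} [DecidableEq X] (m n : ℕ) [NeZero m]
    (h : Equiv.Perm (List X)) (hhaut : treeAut h) (hord : h ^ m = 1)
    (v : Fin m → List X) (hvlen : ∀ i, (v i).length = n)
    (hvinj : Function.Injective v)
    (hcyc : ∀ i, rApp h (v i) = v (i - 1))
    (s : Fin m → Equiv.Perm (List X))
    (hs : ∀ i, ∀ w : List X, rApp h (v i ++ w) = rApp h (v i) ++ rApp (s i) w)
    (k : Fin m → Equiv.Perm (List X)) (hkaut : ∀ i, treeAut (k i))
    (hi : Fin m → Equiv.Perm (List X))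
    (hhi : ∀ i : Fin m,
      hi i = (((List.finRange m).take (i.val + 1)).map fun t => (s t)⁻¹).prod)
    (K : ℕ → Fin m → Equiv.Perm (List X))
    (hK0 : ∀ i, K 0 i = k i)
    (hKs : ∀ c i, K (c + 1) i = (K c i)⁻¹ * K c (i + 1))
    (g : Equiv.Perm (List X))
    (hg : g = ((List.finRange m).map fun i => vStar (v i) (conj (k i) (hi i))).prod) :
    (∀ c : ℕ, engel c g h =
        ((List.finRange m).map fun i => vStar (v i) (conj (K c i) (hi i))).prod) ∧
    ((∀ c : ℕ, ∃ i, K c i ≠ 1) → ∀ c : ℕ, engel c g h ≠ 1) := by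
  have hpref : ∀ i j : Fin m, ∀ u, v i <+: v j ++ u → i = j := by
    intro i j u hp
    apply hvinj
    have h0 := List.prefix_iff_eq_take.mp hp
    rwa [hvlen i, List.take_left' (hvlen j)] at h0
  have hstep : ∀ (i : Fin m) (w : List X),
      rApp h (v i ++ w) = v (i - 1) ++ rApp (s i) w := fun i w => by
    rw [hs, hcyc]
  have hstep' : ∀ (j : Fin m) (u : List X),
      rApp h⁻¹ (v j ++ u) = v (j + 1) ++ rApp (s (j + 1))⁻¹ u := by
    intro j u
    have h1 := hstep (j + 1) (rApp (s (j + 1))⁻¹ u)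
    rw [add_sub_cancel_right, rApp_rApp_inv] at h1
    rw [← h1, rApp_inv_rApp]
  have hnp : ∀ w : List X, (∀ i, ¬ v i <+: w) → ∀ i, ¬ v i <+: rApp h⁻¹ w := by
    intro w hw i hpre
    have h2 := hhaut.2 _ _ hpre
    rw [rApp_rApp_inv, hcyc] at h2
    exact hw (i - 1) h2
  set R : ℕ → Equiv.Perm (List X) :=
    fun t => (((List.finRange m).take t).map fun u => (s u)⁻¹).prod with hRdef
  have hR0 : R 0 = 1 := by simp [hRdef]
  have hRsucc : ∀ t (ht : t < m), R (t + 1) = R t * (s ⟨t, ht⟩)⁻¹ := by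
    intro t ht
    simp only [hRdef]
    rw [List.take_succ]
    have hg1 : (List.finRange m)[t]? = some ⟨t, ht⟩ := by
      rw [List.getElem?_eq_getElem (by simpa using ht)]
      simp
    rw [hg1]
    simp
  have hiR : ∀ i : Fin m, hi i = R (i.val + 1) := fun i => by
    rw [hhi i]
  open Fin.NatCast in
  have hRm : R m = 1 := by
    have chain : ∀ t, t ≤ m → ∀ w,
        rApp (h ^ t) (v ((t : Fin m) - 1) ++ rApp (R t) w)
          = v ((0 : Fin m) - 1) ++ w := by
      intro t
      induction t with
      | zero => intro _ w; simp [hR0, rApp_one']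
      | succ t ih =>
        intro ht w
        have htm : t < m := ht
        have hc : ((t + 1 : ℕ) : Fin m) = (t : Fin m) + 1 := by push_cast; ring
        have hfin : ((t : ℕ) : Fin m) = ⟨t, htm⟩ := by
          ext; simp [Fin.val_cast_of_lt htm]
        rw [pow_succ', rApp_mul, hc, add_sub_cancel_right, hstep,
          ← rApp_mul, hRsucc t htm, hfin, inv_mul_cancel_right, ← hfin]
        exact ih htm.le w
    have hfin2 : ((m : ℕ) : Fin m) = 0 := Fin.natCast_self m
    apply rApp_ext
    intro w
    have h3 := chain m le_rfl w
    rw [hord, rApp_one', hfin2] at h3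
    rw [rApp_one']
    exact List.append_cancel_left h3
  have hiK : ∀ i : Fin m, hi (i + 1) * s (i + 1) = hi i := by
    intro i
    by_cases hlt : i.val + 1 < m
    · have hval : (i + 1 : Fin m).val = i.val + 1 := by
        rw [Fin.val_add, Fin.val_one', Nat.mod_eq_of_lt (show 1 < m by omega),
          Nat.mod_eq_of_lt hlt]
      have hmk : (⟨i.val + 1, hlt⟩ : Fin m) = i + 1 := by ext; exact hval.symm
      rw [hiR, hiR, hval, hRsucc (i.val + 1) hlt, hmk, inv_mul_cancel_right]
    · have him : i.val + 1 = m := by have := i.isLt; omega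
      have hi1 : i + 1 = 0 := by
        ext
        rw [Fin.val_add, Fin.val_one']
        rcases Nat.lt_or_ge 1 m with h1 | h1
        · rw [Nat.mod_eq_of_lt h1, him, Nat.mod_self]; rfl
        · have hm1 : m = 1 := le_antisymm h1 (NeZero.pos m)
          subst hm1
          simp
      rw [hi1, hiR, hiR, him, hRm]
      simp only [Fin.val_zero]
      rw [hRsucc 0 (NeZero.pos m), hR0, one_mul]
      have hmk0 : (⟨0, NeZero.pos m⟩ : Fin m) = 0 := rfl
      rw [hmk0]
      simp [Fin.val_zero]
  have main : ∀ c : ℕ, engel c g h = Pr v fun i => conj (K c i) (hi i) := by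
    intro c
    induction c with
    | zero =>
      show g = _
      rw [hg]
      simp only [Pr, hK0]
    | succ c ih =>
      show AutSG.comm (engel c g h) h = _
      rw [ih]
      apply Pr_unique v hpref
      · intro i u
        have hq : conj (K (c + 1) i) (hi i) =
            (conj (K c i) (hi i))⁻¹ * ((s (i + 1))⁻¹
              * (conj (K c (i + 1)) (hi (i + 1)) * s (i + 1))) := by
          have key := hiK i
          simp only [conj, hKs, mul_inv_rev]
          rw [← key]
          group
        simp only [AutSG.comm, rApp_mul]
        rw [rApp_Pr_inv_act v hpref, hstep', rApp_Pr_act v hpref, hstep,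
          add_sub_cancel_right, ← rApp_mul, ← rApp_mul, ← rApp_mul, hq]
      · intro w hw
        simp only [AutSG.comm, rApp_mul]
        rw [rApp_Pr_inv_fix v _ w hw, rApp_Pr_fix v _ _ (hnp w hw),
          rApp_rApp_inv]
  refine ⟨fun c => main c, ?_⟩
  intro hne c hone
  obtain ⟨i, hKi⟩ := hne c
  rw [main c] at hone
  apply hKi
  rw [← conj_eq_one_iff (K c i) (hi i)]
  apply rApp_ext
  intro u
  rw [rApp_one']
  have h3 := rApp_Pr_act v hpref (fun j => conj (K c j) (hi j)) i u
  rw [hone, rApp_one'] at h3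
  exact (List.append_cancel_left h3).symm
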